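/- Let G be a graph of order n = 4k+1 whose Seidel matrix S is singular with a nullspace vector φ ∈ {±1}^n. If G has a vertex of degree 1, then the number of odd-degree vertices of G is exactly 2k or 2k + 2. -/

import Mathlib

/-!
Write `T = ∑ j, φ j` and `N i = ∑_{j ∼ i} φ j`. Row `i` of `S φ = 0` reads `T = φ i + 2 N i`, and
`N i ≡ deg i (mod 2)` because every `φ j` is odd. Hence two vertices have degrees of the same parity
exactly when `φ` agrees on them, so the odd vertices form the sign class of the leaf `v`. If `u` is
the neighbour of `v`, then `T = φ v + 2 φ u`, and the sign class of `φ v` has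
`(n + φ v T) / 2 = (n + 1 + 2 φ v φ u) / 2` elements, that is `2k + 2` or `2k`.
-/

open Matrix Finset

def seidelMatrix {n : ℕ} (G : SimpleGraph (Fin n)) [DecidableRel G.Adj] :
    Matrix (Fin n) (Fin n) ℤ :=
  Matrix.of fun i j => if i = j then 0 else if G.Adj i j then -1 else 1

section SignVector

variable {ι : Type*}

lemma odd_sum_iff_odd_card_of_sign (s : Finset ι) {φ : ι → ℤ}
    (hφ : ∀ i ∈ s, φ i = 1 ∨ φ i = -1) : Odd (∑ i ∈ s, φ i) ↔ Odd (#s : ℤ) := by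
  have heven : Even (∑ i ∈ s, φ i - #s) := by
    rw [card_eq_sum_ones, Nat.cast_sum, ← sum_sub_distrib]
    refine Finset.even_sum _ fun i hi => ?_
    rcases hφ i hi with h | h <;> simp [h]
  constructor <;> intro h
  · simpa using heven.sub_odd h
  · simpa using heven.add_odd h

lemma two_mul_card_filter_eq_of_sign [Fintype ι] {φ : ι → ℤ} (hφ : ∀ i, φ i = 1 ∨ φ i = -1)
    {s : ℤ} (hs : s = 1 ∨ s = -1) :
    2 * (#{i | φ i = s} : ℤ) = Fintype.card ι + s * ∑ i, φ i := by
  have hterm : ∀ i, s * φ i = 2 * (if φ i = s then 1 else 0) - 1 := by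
    intro i
    rcases hφ i with h | h <;> rcases hs with rfl | rfl <;> simp [h]
  rw [mul_sum, sum_congr rfl fun i _ => hterm i, sum_sub_distrib, ← mul_sum, sum_boole]
  simp

end SignVector

section Seidel

variable {n : ℕ} (G : SimpleGraph (Fin n)) [DecidableRel G.Adj]

lemma seidelMatrix_mulVec_apply (φ : Fin n → ℤ) (i : Fin n) :
    (seidelMatrix G *ᵥ φ) i = ∑ j, φ j - φ i - 2 * ∑ j ∈ G.neighborFinset i, φ j := by
  have hentry : ∀ j, seidelMatrix G i j * φ j =
      φ j - (if i = j then φ j else 0) - 2 * (if G.Adj i j then φ j else 0) := by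
    intro j
    by_cases h : i = j
    · subst h; simp [seidelMatrix]
    · by_cases ha : G.Adj i j <;> simp [seidelMatrix, h, ha]; ring
  simp only [mulVec, dotProduct, hentry, sum_sub_distrib, sum_ite_eq, mem_univ, if_true,
    ← mul_sum, ← sum_filter, SimpleGraph.neighborFinset_eq_filter]

variable {G}

lemma sum_eq_add_two_mul_sum_neighborFinset {φ : Fin n → ℤ} (hnull : seidelMatrix G *ᵥ φ = 0)
    (i : Fin n) : ∑ j, φ j = φ i + 2 * ∑ j ∈ G.neighborFinset i, φ j := by
  have := congrFun hnull i
  rw [seidelMatrix_mulVec_apply, Pi.zero_apply] at this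
  linarith

lemma odd_degree_iff_odd_degree_iff_of_mulVec_eq_zero {φ : Fin n → ℤ}
    (hφ : ∀ i, φ i = 1 ∨ φ i = -1) (hnull : seidelMatrix G *ᵥ φ = 0) (i j : Fin n) :
    (Odd (G.degree i) ↔ Odd (G.degree j)) ↔ φ i = φ j := by
  have hparity : ∀ v, Odd (G.degree v) ↔ Odd (∑ w ∈ G.neighborFinset v, φ w) := fun v => by
    rw [odd_sum_iff_odd_card_of_sign _ fun w _ => hφ w, G.card_neighborFinset_eq_degree,
      Int.odd_coe_nat]
  have hi := sum_eq_add_two_mul_sum_neighborFinset hnull i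
  have hj := sum_eq_add_two_mul_sum_neighborFinset hnull j
  rw [hparity, hparity, Int.odd_iff, Int.odd_iff]
  rcases hφ i with h | h <;> rcases hφ j with h' | h' <;> omega

end Seidel

theorem leaf_odd_vertex_count_general {n k : ℕ} (hn : n = 4 * k + 1)
    (G : SimpleGraph (Fin n)) [DecidableRel G.Adj]
    (hφ : ∃ φ : Fin n → ℤ, (∀ i, φ i = 1 ∨ φ i = -1) ∧ (seidelMatrix G).mulVec φ = 0)
    (hleaf : ∃ v, G.degree v = 1) :
    (Finset.univ.filter fun v => Odd (G.degree v)).card = 2 * k ∨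
    (Finset.univ.filter fun v => Odd (G.degree v)).card = 2 * k + 2 := by
  obtain ⟨φ, hsign, hnull⟩ := hφ
  obtain ⟨v, hv⟩ := hleaf
  obtain ⟨u, hu⟩ := card_eq_one.mp ((G.card_neighborFinset_eq_degree v).trans hv)
  have hodd : univ.filter (fun i => Odd (G.degree i)) = univ.filter (fun i => φ i = φ v) := by
    ext i
    simp [← odd_degree_iff_odd_degree_iff_of_mulVec_eq_zero hsign hnull i v, hv]
  have hcount := two_mul_card_filter_eq_of_sign hsign (hsign v)
  have hsum := sum_eq_add_two_mul_sum_neighborFinset hnull v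
  rw [hu, sum_singleton] at hsum
  rw [hsum, Fintype.card_fin] at hcount
  have hsigned : φ v * (φ v + 2 * φ u) = 3 ∨ φ v * (φ v + 2 * φ u) = -1 := by
    rcases hsign v with h | h <;> rcases hsign u with h' | h' <;> simp [h, h']
  rw [hodd]
  omega

theorem leaf_odd_vertex_count {n k : ℕ} (hn : n = 4 * k + 1)
    (G : SimpleGraph (Fin n)) [DecidableRel G.Adj]
    (hsing : (seidelMatrix G).det = 0)
    (hφ : ∃ φ : Fin n → ℤ, (∀ i, φ i = 1 ∨ φ i = -1) ∧ (seidelMatrix G).mulVec φ = 0)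
    (hleaf : ∃ v, G.degree v = 1) :
    (Finset.univ.filter fun v => Odd (G.degree v)).card = 2 * k ∨
    (Finset.univ.filter fun v => Odd (G.degree v)).card = 2 * k + 2 :=
  leaf_odd_vertex_count_general hn G hφ hleaf
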